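/- arXiv:2012.07651 — 7 statements merged into one kernel-verified Lean document; each statement's English description precedes it below -/
import Mathlib

section
/- Every edge of a graph lies in only finitely many bonds of size k of that graph, for any natural number k. (A bond is a minimal nonempty edge cut, equivalently a cut both of whose sides induce connected subgraphs.) -/
/-!
A bond `E(A, B)` containing the edge `uv` is an inclusion-minimal set of edges separating `u`
from `v`, so it suffices to bound the minimal `u`–`v` cuts of size at most `k`. Any such cut meets
every `u`–`v` path `P`; for each of the finitely many edges `f` of `P`, removing `f` from a minimal
cut containing it leaves a minimal `u`–`v` cut of size at most `k - 1` in `G - f`, and induction on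
`k` finishes the count.
-/

open SimpleGraph

variable {V : Type*}

/-- The cut induced by a side `A`: edges of `G` with one endpoint in `A` and one outside. -/
def cutEdges (G : SimpleGraph V) (A : Set V) : Set (Sym2 V) :=
  {e | ∃ u v, e = s(u, v) ∧ G.Adj u v ∧ u ∈ A ∧ v ∉ A}

/-- A cut-separation, given by a side `A`: both sides nonempty. -/
def IsCutSep (_G : SimpleGraph V) (A : Set V) : Prop :=
  A.Nonempty ∧ Aᶜ.Nonempty

/-- A bond-separation: a cut-separation both of whose sides induce connected subgraphs. -/
def IsBondSep (G : SimpleGraph V) (A : Set V) : Prop :=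
  A.Nonempty ∧ Aᶜ.Nonempty ∧ (G.induce A).Connected ∧ (G.induce Aᶜ).Connected

/-- Two separations (given by sides) are nested. -/
def Nested (A C : Set V) : Prop :=
  A ⊆ C ∨ A ⊆ Cᶜ ∨ Aᶜ ⊆ C ∨ Aᶜ ⊆ Cᶜ

/-- Two separations cross if they are not nested. -/
def Crosses (A C : Set V) : Prop := ¬ Nested A C

/-- `u` and `v` are (<k)-inseparable: no edge set of size < k separates them. -/
def Insep (G : SimpleGraph V) (k : ℕ) (u v : V) : Prop :=
  ∀ F : Set (Sym2 V), F.Finite → F.ncard < k → (G.deleteEdges F).Reachable u v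

/-- A k-edge-block: an equivalence class of (<k)-inseparability. -/
def IsEdgeBlock (G : SimpleGraph V) (k : ℕ) (B : Set V) : Prop :=
  ∃ v, B = {w | Insep G k v w}

/-- The edge set `F` separates `B₁` from `B₂` in `G`. -/
def SepSets (G : SimpleGraph V) (B₁ B₂ : Set V) (F : Set (Sym2 V)) : Prop :=
  ∀ u ∈ B₁, ∀ v ∈ B₂, ¬ (G.deleteEdges F).Reachable u v

/-- The minimum size of an edge set separating `B₁` from `B₂`. -/
noncomputable def sepOrder (G : SimpleGraph V) (B₁ B₂ : Set V) : ℕ :=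
  sInf {n | ∃ F : Set (Sym2 V), F.Finite ∧ F.ncard = n ∧ SepSets G B₁ B₂ F}

def IsMinimalCut (G : SimpleGraph V) (u v : V) (F : Set (Sym2 V)) : Prop :=
  ¬ (G.deleteEdges F).Reachable u v ∧ ∀ f ∈ F, (G.deleteEdges (F \ {f})).Reachable u v

namespace IsMinimalCut

variable {G : SimpleGraph V} {u v : V} {F : Set (Sym2 V)}

lemma symm (h : IsMinimalCut G u v F) : IsMinimalCut G v u F :=
  ⟨fun hr => h.1 hr.symm, fun f hf => (h.2 f hf).symm⟩

lemma eq_empty_of_not_reachable (h : IsMinimalCut G u v F) (huv : ¬ G.Reachable u v) :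
    F = ∅ :=
  Set.eq_empty_of_forall_notMem fun f hf => huv ((h.2 f hf).mono (deleteEdges_le _))

lemma exists_mem_edges (h : IsMinimalCut G u v F) (p : G.Walk u v) : ∃ f ∈ p.edges, f ∈ F := by
  by_contra! hp
  refine h.1 ⟨p.transfer (G.deleteEdges F) fun f hf => ?_⟩
  rw [edgeSet_deleteEdges]
  exact ⟨p.edges_subset_edgeSet hf, hp f hf⟩

lemma deleteEdges_singleton (h : IsMinimalCut G u v F) {f : Sym2 V} (hf : f ∈ F) :
    IsMinimalCut (G.deleteEdges {f}) u v (F \ {f}) := by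
  refine ⟨?_, fun f' hf' => ?_⟩
  · rw [deleteEdges_deleteEdges, Set.union_sdiff_cancel (Set.singleton_subset_iff.mpr hf)]
    exact h.1
  · have hF : {f} ∪ (F \ {f}) \ {f'} = F \ {f'} := by grind
    rw [deleteEdges_deleteEdges, hF]
    exact h.2 f' hf'.1

end IsMinimalCut

lemma setOf_isMinimalCut_finite (k : ℕ) (G : SimpleGraph V) (u v : V) :
    {F : Set (Sym2 V) | F.Finite ∧ F.ncard ≤ k ∧ IsMinimalCut G u v F}.Finite := by
  induction k generalizing G with
  | zero =>
    refine (Set.finite_singleton ∅).subset ?_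
    rintro F ⟨hfin, hcard, -⟩
    exact (Set.ncard_eq_zero hfin).mp (Nat.le_zero.mp hcard)
  | succ k ih =>
    by_cases huv : G.Reachable u v
    · obtain ⟨p⟩ := huv
      refine ((List.finite_toSet p.edges).biUnion fun f _ =>
        (ih (G.deleteEdges {f})).image (insert f)).subset ?_
      rintro F ⟨hfin, hcard, hF⟩
      obtain ⟨f, hfp, hfF⟩ := hF.exists_mem_edges p
      refine Set.mem_biUnion hfp ⟨F \ {f}, ⟨hfin.sdiff, ?_,
        hF.deleteEdges_singleton hfF⟩, Set.insert_sdiff_self_of_mem hfF⟩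
      rw [Set.ncard_sdiff_singleton_of_mem hfF]
      omega
    · refine (Set.finite_singleton ∅).subset ?_
      rintro F ⟨-, -, hF⟩
      exact hF.eq_empty_of_not_reachable huv

lemma mk_mem_cutEdges_iff {G : SimpleGraph V} {A : Set V} {p q : V} :
    s(p, q) ∈ cutEdges G A ↔ G.Adj p q ∧ ¬ (p ∈ A ↔ q ∈ A) := by
  constructor
  · rintro ⟨u, v, huv, hadj, hu, hv⟩
    rcases Sym2.eq_iff.mp huv with ⟨rfl, rfl⟩ | ⟨rfl, rfl⟩
    exacts [⟨hadj, by tauto⟩, ⟨hadj.symm, by tauto⟩]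
  · rintro ⟨hadj, hpq⟩
    by_cases hp : p ∈ A
    · exact ⟨p, q, rfl, hadj, hp, by tauto⟩
    · exact ⟨q, p, Sym2.eq_swap, hadj.symm, by tauto, hp⟩

lemma mk_notMem_cutEdges_of_iff {G : SimpleGraph V} {A : Set V} {p q : V}
    (h : p ∈ A ↔ q ∈ A) : s(p, q) ∉ cutEdges G A :=
  fun hpq => (mk_mem_cutEdges_iff.mp hpq).2 h

lemma not_reachable_deleteEdges_cutEdges {G : SimpleGraph V} {A : Set V} {a b : V}
    (ha : a ∈ A) (hb : b ∉ A) : ¬ (G.deleteEdges (cutEdges G A)).Reachable a b := by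
  rintro ⟨p⟩
  obtain ⟨d, -, hd, hd'⟩ := p.exists_boundary_dart A ha hb
  have hadj := d.adj
  rw [deleteEdges_adj] at hadj
  exact hadj.2 (mk_mem_cutEdges_iff.mpr ⟨hadj.1, by tauto⟩)

lemma SimpleGraph.Connected.reachable_deleteEdges_of_induce {G : SimpleGraph V} {A : Set V}
    {F : Set (Sym2 V)} (hA : (G.induce A).Connected) (hF : ∀ p ∈ A, ∀ q ∈ A, s(p, q) ∉ F)
    {a b : V} (ha : a ∈ A) (hb : b ∈ A) : (G.deleteEdges F).Reachable a b :=
  (hA.preconnected ⟨a, ha⟩ ⟨b, hb⟩).map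
    { toFun := Subtype.val
      map_rel' := fun {x y} hxy => (deleteEdges_adj ..).mpr ⟨hxy, hF _ x.2 _ y.2⟩ }

lemma IsBondSep.isMinimalCut_cutEdges {G : SimpleGraph V} {A : Set V} (hA : IsBondSep G A)
    {a b : V} (ha : a ∈ A) (hb : b ∉ A) : IsMinimalCut G a b (cutEdges G A) := by
  obtain ⟨-, -, hAconn, hBconn⟩ := hA
  refine ⟨not_reachable_deleteEdges_cutEdges ha hb, ?_⟩
  rintro f ⟨x, y, rfl, hxy, hx, hy⟩
  have hax : (G.deleteEdges (cutEdges G A \ {s(x, y)})).Reachable a x :=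
    hAconn.reachable_deleteEdges_of_induce
      (fun p hp q hq h => mk_notMem_cutEdges_of_iff (iff_of_true hp hq) h.1) ha hx
  have hyb : (G.deleteEdges (cutEdges G A \ {s(x, y)})).Reachable y b :=
    hBconn.reachable_deleteEdges_of_induce
      (fun p hp q hq h => mk_notMem_cutEdges_of_iff (iff_of_false hp hq) h.1) hy hb
  have hxy' : (G.deleteEdges (cutEdges G A \ {s(x, y)})).Adj x y :=
    (deleteEdges_adj ..).mpr ⟨hxy, fun h => h.2 rfl⟩
  exact (hax.trans hxy'.reachable).trans hyb

/-- Every edge lies in only finitely many bonds of size k. -/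
theorem stmt_0 (G : SimpleGraph V) (e : Sym2 V) (k : ℕ) :
    {F : Set (Sym2 V) | (∃ A : Set V, IsBondSep G A ∧ F = cutEdges G A) ∧
      F.Finite ∧ F.ncard = k ∧ e ∈ F}.Finite := by
  induction e using Sym2.ind with
  | _ u v =>
    refine (setOf_isMinimalCut_finite k G u v).subset ?_
    rintro F ⟨⟨A, hA, rfl⟩, hfin, rfl, he⟩
    refine ⟨hfin, le_rfl, ?_⟩
    have huv := (mk_mem_cutEdges_iff.mp he).2
    by_cases hu : u ∈ A
    · exact hA.isMinimalCut_cutEdges hu (by tauto)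
    · exact (hA.isMinimalCut_cutEdges (by tauto) hu).symm
end

section
/- Let G be a connected graph, k a natural number, and let F_0, F_1, … be infinitely many distinct bonds of G, each of size at most k, such that each bond F_n has a side A_n with A_n ⊊ A_m whenever n < m. Then the union of all A_n equals V(G). -/
open SimpleGraph

variable {V : Type*}

/-!
Suppose some vertex `x` lies outside `U = ⋃ n, A n`. Every edge of the cut `E(U, Uᶜ)` lies in
all late cuts `E(A n, (A n)ᶜ)`, so this cut has at most `k` edges and, being finite, is
eventually contained in each `E(A n, (A n)ᶜ)`. Conversely, an edge `uv` of such a cut with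
`v ∈ U \ A n` is impossible: a path from `v` to `x` in the connected graph on `(A n)ᶜ` has to
leave `U`, through an edge of `E(U, Uᶜ)` that avoids `A n`. So all late cuts coincide with
`E(U, Uᶜ)`, contradicting distinctness.
-/

open Filter

variable {G : SimpleGraph V}

lemma notMem_cutEdges {A : Set V} {p q : V} (hp : p ∉ A) (hq : q ∉ A) :
    s(p, q) ∉ cutEdges G A := by
  rintro ⟨a, b, hab, -, ha, -⟩
  rcases Sym2.eq_iff.1 hab with ⟨rfl, -⟩ | ⟨-, rfl⟩
  · exact hp ha
  · exact hq ha

lemma eventually_mem_cutEdges_of_mem_cutEdges_iUnion {ι : Type*} [Preorder ι] {A : ι → Set V}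
    (hA : Monotone A) {e : Sym2 V} (he : e ∈ cutEdges G (⋃ i, A i)) :
    ∀ᶠ i in atTop, e ∈ cutEdges G (A i) := by
  obtain ⟨u, v, rfl, huv, hu, hv⟩ := he
  obtain ⟨j, huj⟩ := Set.mem_iUnion.1 hu
  filter_upwards [eventually_ge_atTop j] with i hji
  exact ⟨u, v, rfl, huv, hA hji huj, fun hvi => hv (Set.mem_iUnion_of_mem i hvi)⟩

lemma Set.finite_of_eventually_mem_of_ncard_le {α ι : Type*} {l : Filter ι} [l.NeBot]
    {S : Set α} {T : ι → Set α} {k : ℕ} (hT : ∀ i, (T i).Finite) (hk : ∀ i, (T i).ncard ≤ k)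
    (hS : ∀ a ∈ S, ∀ᶠ i in l, a ∈ T i) : S.Finite := by
  by_contra hinf
  obtain ⟨t, htS, htk⟩ := Set.Infinite.exists_subset_ncard_eq hinf (k + 1)
  have hev : ∀ᶠ i in l, t ⊆ T i :=
    (eventually_all_finite (Set.finite_of_ncard_pos (by omega))).2 fun a ha => hS a (htS ha)
  obtain ⟨i, hti⟩ := hev.exists
  have := (Set.ncard_le_ncard hti (hT i)).trans (hk i)
  omega

lemma cutEdges_subset_of_subset_of_preconnected_compl {A U : Set V} (hAU : A ⊆ U)
    (hconn : (G.induce Aᶜ).Preconnected) (hU : Uᶜ.Nonempty)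
    (hsub : cutEdges G U ⊆ cutEdges G A) : cutEdges G A ⊆ cutEdges G U := by
  rintro _ ⟨u, v, rfl, huv, hu, hv⟩
  by_cases hvU : v ∈ U
  swap
  · exact ⟨u, v, rfl, huv, hAU hu, hvU⟩
  exfalso
  obtain ⟨x, hx⟩ := hU
  obtain ⟨w⟩ := hconn ⟨v, hv⟩ ⟨x, fun hxA => hx (hAU hxA)⟩
  obtain ⟨d, -, hdU, hdU'⟩ := w.exists_boundary_dart (Subtype.val ⁻¹' U) hvU hx
  have hcutU : s(d.fst.1, d.snd.1) ∈ cutEdges G U := ⟨_, _, rfl, d.adj, hdU, hdU'⟩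
  exact notMem_cutEdges d.fst.2 d.snd.2 (hsub hcutU)

theorem stmt_1_general (G : SimpleGraph V) (k : ℕ) (A : ℕ → Set V)
    (hbond : ∀ n, IsBondSep G (A n))
    (hfin : ∀ n, (cutEdges G (A n)).Finite)
    (hsize : ∀ n, (cutEdges G (A n)).ncard ≤ k)
    (hdist : ∀ m n, m ≠ n → cutEdges G (A m) ≠ cutEdges G (A n))
    (hmono : ∀ m n, m < n → A m ⊂ A n) :
    (⋃ n, A n) = Set.univ := by
  by_contra hU
  have hAmono : Monotone A :=
    monotone_nat_of_le_succ fun n => (hmono n (n + 1) n.lt_succ_self).subset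
  have hev : ∀ e ∈ cutEdges G (⋃ n, A n), ∀ᶠ n in atTop, e ∈ cutEdges G (A n) :=
    fun _ => eventually_mem_cutEdges_of_mem_cutEdges_iUnion hAmono
  have hUfin : (cutEdges G (⋃ n, A n)).Finite :=
    Set.finite_of_eventually_mem_of_ncard_le hfin hsize hev
  obtain ⟨N, hN⟩ := eventually_atTop.1 ((eventually_all_finite hUfin).2 hev)
  have hcut_eq : ∀ n ≥ N, cutEdges G (A n) = cutEdges G (⋃ n, A n) := fun n hn =>
    (cutEdges_subset_of_subset_of_preconnected_compl (Set.subset_iUnion A n)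
      (hbond n).2.2.2.preconnected (Set.nonempty_compl.2 hU) (hN n hn)).antisymm (hN n hn)
  exact hdist N (N + 1) (by omega) ((hcut_eq N le_rfl).trans (hcut_eq (N + 1) (by omega)).symm)

/-- Corollary 2.2: a strictly increasing chain of sides of ≤k-sized bonds exhausts V. -/
theorem stmt_1 (G : SimpleGraph V) (hG : G.Connected) (k : ℕ) (A : ℕ → Set V)
    (hbond : ∀ n, IsBondSep G (A n))
    (hfin : ∀ n, (cutEdges G (A n)).Finite)
    (hsize : ∀ n, (cutEdges G (A n)).ncard ≤ k)
    (hdist : ∀ m n, m ≠ n → cutEdges G (A m) ≠ cutEdges G (A n))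
    (hmono : ∀ m n, m < n → A m ⊂ A n) :
    (⋃ n, A n) = Set.univ :=
  stmt_1_general G k A hbond hfin hsize hdist hmono
end

section
/- Every finite-order bond-separation of a graph G is crossed by only finitely many bond-separations of G of order at most k, for any given k ∈ ℕ. -/
/-!
A crossing bond-separation `{C, Cᶜ}` has both sides connected and meeting both sides of `A`, so
each of `C` and `Cᶜ` contains an endpoint of one of the finitely many edges of the cut of `A`.
It therefore suffices to show that, for fixed vertices `x` and `u`, only finitely many bonds of
order at most `k` separate `x` from `u`. This goes by induction on `k`: if `x` and `u` are not
connected, the side containing `x` is the component of `x`; otherwise every such bond cuts an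
edge of a fixed `x`–`u` walk, and deleting that edge leaves a bond of order at most `k - 1` in
the smaller graph.
-/

open SimpleGraph

variable {V : Type*}

section

variable {G : SimpleGraph V}

lemma cutEdges_compl (G : SimpleGraph V) (S : Set V) : cutEdges G Sᶜ = cutEdges G S := by
  ext e
  constructor
  · rintro ⟨u, v, rfl, huv, hu, hv⟩
    exact ⟨v, u, Sym2.eq_swap, huv.symm, not_not.1 hv, hu⟩
  · rintro ⟨u, v, rfl, huv, hu, hv⟩
    exact ⟨v, u, Sym2.eq_swap, huv.symm, hv, not_not.2 hu⟩

lemma cutEdges_deleteEdges_singleton (G : SimpleGraph V) (S : Set V) (f : Sym2 V) :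
    cutEdges (G.deleteEdges {f}) S = cutEdges G S \ {f} := by
  ext e
  constructor
  · rintro ⟨u, v, rfl, huv, hu, hv⟩
    rw [deleteEdges_adj] at huv
    exact ⟨⟨u, v, rfl, huv.1, hu, hv⟩, huv.2⟩
  · rintro ⟨⟨u, v, rfl, huv, hu, hv⟩, hne⟩
    exact ⟨u, v, rfl, deleteEdges_adj.2 ⟨huv, hne⟩, hu, hv⟩

lemma induce_deleteEdges_singleton_of_mem_cutEdges {S : Set V} {f : Sym2 V}
    (hf : f ∈ cutEdges G S) : (G.deleteEdges {f}).induce S = G.induce S := by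
  obtain ⟨a, b, rfl, -, ha, hb⟩ := hf
  ext ⟨u, hu⟩ ⟨v, hv⟩
  suffices s(u, v) ≠ s(a, b) by simpa using fun _ => this
  intro h
  rcases Sym2.eq_iff.1 h with ⟨rfl, rfl⟩ | ⟨rfl, rfl⟩ <;> contradiction

lemma IsBondSep.deleteEdges_singleton {S : Set V} {f : Sym2 V} (hS : IsBondSep G S)
    (hf : f ∈ cutEdges G S) : IsBondSep (G.deleteEdges {f}) S := by
  obtain ⟨hne, hcne, hconn, hcconn⟩ := hS
  have hf' : f ∈ cutEdges G Sᶜ := (cutEdges_compl G S).symm ▸ hf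
  refine ⟨hne, hcne, ?_, ?_⟩
  · rwa [induce_deleteEdges_singleton_of_mem_cutEdges hf]
  · rwa [induce_deleteEdges_singleton_of_mem_cutEdges hf']

lemma SimpleGraph.Walk.exists_dart_mem_cutEdges {x u : V} (p : G.Walk x u) {S : Set V}
    (hx : x ∈ S) (hu : u ∉ S) : ∃ d ∈ p.darts, d.edge ∈ cutEdges G S := by
  obtain ⟨d, hd, hfst, hsnd⟩ := p.exists_boundary_dart S hx hu
  exact ⟨d, hd, d.fst, d.snd, rfl, d.adj, hfst, hsnd⟩

lemma SimpleGraph.Connected.reachable_of_induce {S : Set V} (hS : (G.induce S).Connected)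
    {x y : V} (hx : x ∈ S) (hy : y ∈ S) : G.Reachable x y := by
  simpa using (hS.preconnected ⟨x, hx⟩ ⟨y, hy⟩).map (Embedding.induce S).toHom

lemma IsBondSep.eq_setOf_reachable {S : Set V} (hS : IsBondSep G S) {x u : V} (hx : x ∈ S)
    (hu : u ∉ S) (hxu : ¬ G.Reachable x u) : S = {y | G.Reachable x y} := by
  ext y
  refine ⟨hS.2.2.1.reachable_of_induce hx, fun hxy => ?_⟩
  by_contra hy
  exact hxu (hxy.trans (hS.2.2.2.reachable_of_induce (S := Sᶜ) hy hu))

def bondSepsBetween (G : SimpleGraph V) (k : ℕ) (x u : V) : Set (Set V) :=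
  {S | IsBondSep G S ∧ x ∈ S ∧ u ∉ S ∧ (cutEdges G S).Finite ∧ (cutEdges G S).ncard ≤ k}

lemma finite_bondSepsBetween_of_not_reachable {k : ℕ} {x u : V} (hxu : ¬ G.Reachable x u) :
    (bondSepsBetween G k x u).Finite :=
  (Set.finite_singleton {y | G.Reachable x y}).subset
    fun _ ⟨hS, hx, hu, _⟩ => hS.eq_setOf_reachable hx hu hxu

lemma bondSepsBetween_zero_of_reachable {x u : V} (hxu : G.Reachable x u) :
    bondSepsBetween G 0 x u = ∅ := by
  refine Set.eq_empty_of_forall_notMem fun S ⟨_, hx, hu, hfin, hk⟩ => ?_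
  obtain ⟨p⟩ := hxu
  obtain ⟨d, -, hd⟩ := p.exists_dart_mem_cutEdges hx hu
  exact (Set.ncard_pos hfin).2 ⟨_, hd⟩ |>.not_ge hk

lemma bondSepsBetween_succ_subset {k : ℕ} {x u : V} (p : G.Walk x u) :
    bondSepsBetween G (k + 1) x u ⊆
      ⋃ d ∈ {d | d ∈ p.darts}, bondSepsBetween (G.deleteEdges {d.edge}) k x u := by
  rintro S ⟨hS, hx, hu, hfin, hk⟩
  obtain ⟨d, hd, hdS⟩ := p.exists_dart_mem_cutEdges hx hu
  refine Set.mem_biUnion hd ⟨hS.deleteEdges_singleton hdS, hx, hu, ?_, ?_⟩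
  · rw [cutEdges_deleteEdges_singleton]
    exact hfin.sdiff
  · rw [cutEdges_deleteEdges_singleton, Set.ncard_sdiff_singleton_of_mem hdS]
    omega

theorem finite_bondSepsBetween (k : ℕ) (x u : V) :
    ∀ G : SimpleGraph V, (bondSepsBetween G k x u).Finite := by
  induction k with
  | zero =>
    intro G
    by_cases hxu : G.Reachable x u
    · simp [bondSepsBetween_zero_of_reachable hxu]
    · exact finite_bondSepsBetween_of_not_reachable hxu
  | succ k ih =>
    intro G
    by_cases hxu : G.Reachable x u
    · obtain ⟨p⟩ := hxu
      exact (p.darts.finite_toSet.biUnion fun d _ => ih _).subset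
        (bondSepsBetween_succ_subset p)
    · exact finite_bondSepsBetween_of_not_reachable hxu

def cutVertices (G : SimpleGraph V) (A : Set V) : Set V :=
  ⋃ e ∈ cutEdges G A, {v | v ∈ e}

lemma finite_cutVertices {A : Set V} (h : (cutEdges G A).Finite) :
    (cutVertices G A).Finite := by
  classical
  exact h.biUnion fun e _ => e.toFinset.finite_toSet.subset fun _ => Sym2.mem_toFinset.2

lemma inter_cutVertices_nonempty {A C : Set V} (hC : (G.induce C).Connected)
    (hA : (C ∩ A).Nonempty) (hAc : (C \ A).Nonempty) : (C ∩ cutVertices G A).Nonempty := by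
  obtain ⟨a, haC, haA⟩ := hA
  obtain ⟨b, hbC, hbA⟩ := hAc
  obtain ⟨q⟩ := hC.preconnected ⟨a, haC⟩ ⟨b, hbC⟩
  obtain ⟨d, -, hfst, hsnd⟩ := q.exists_boundary_dart (Subtype.val ⁻¹' A) haA hbA
  have hd : s(d.fst.1, d.snd.1) ∈ cutEdges G A := ⟨d.fst, d.snd, rfl, d.adj, hfst, hsnd⟩
  exact ⟨d.fst, d.fst.2, Set.mem_biUnion hd (Sym2.mem_mk_left _ _)⟩

lemma Crosses.compl_right {A C : Set V} (h : Crosses A C) : Crosses A Cᶜ := by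
  simp only [Crosses, Nested, compl_compl] at h ⊢
  tauto

lemma Crosses.inter_nonempty {A C : Set V} (h : Crosses A C) :
    (C ∩ A).Nonempty ∧ (C \ A).Nonempty := by
  simp only [Crosses, Nested, not_or, Set.not_subset] at h
  obtain ⟨-, ⟨a, haA, haC⟩, -, ⟨b, hbA, hbC⟩⟩ := h
  exact ⟨⟨a, not_not.1 haC, haA⟩, ⟨b, not_not.1 hbC, hbA⟩⟩

end

theorem stmt_3_general (G : SimpleGraph V) (A : Set V)
    (hfin : (cutEdges G A).Finite) (k : ℕ) :
    {C : Set V | IsBondSep G C ∧ (cutEdges G C).Finite ∧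
      (cutEdges G C).ncard ≤ k ∧ Crosses A C}.Finite := by
  have hX := finite_cutVertices hfin
  refine (hX.biUnion fun x _ => hX.biUnion fun u _ => finite_bondSepsBetween k x u G).subset ?_
  rintro C ⟨hC, hCfin, hCk, hcross⟩
  obtain ⟨hCA, hCA'⟩ := hcross.inter_nonempty
  obtain ⟨hCcA, hCcA'⟩ := hcross.compl_right.inter_nonempty
  obtain ⟨x, hxC, hxX⟩ := inter_cutVertices_nonempty hC.2.2.1 hCA hCA'
  obtain ⟨u, huC, huX⟩ := inter_cutVertices_nonempty hC.2.2.2 hCcA hCcA'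
  exact Set.mem_biUnion hxX (Set.mem_biUnion huX ⟨hC, hxC, huC, hCfin, hCk⟩)

/-- Lemma 3.1: a finite-order bond-separation is crossed by only finitely many
bond-separations of order at most k. -/
theorem stmt_3 (G : SimpleGraph V) (A : Set V) (hA : IsBondSep G A)
    (hfin : (cutEdges G A).Finite) (k : ℕ) :
    {C : Set V | IsBondSep G C ∧ (cutEdges G C).Finite ∧
      (cutEdges G C).ncard ≤ k ∧ Crosses A C}.Finite :=
  stmt_3_general G A hfin k
end

section
/- If two cut-separations {A₁,B₁} and {A₂,B₂} of a graph cross, and a third cut-separation {X,Y} is nested with both of them, then {X,Y} is nested with {A₁∩A₂, B₁∪B₂}, provided the latter is a cut-separation (i.e., A₁∩A₂ is nonempty). -/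
open SimpleGraph

variable {V : Type*}

/-- Lemma 3.2: a separation nested with both of two crossing cut-separations is
nested with their corner. -/
theorem stmt_4 (G : SimpleGraph V) (A₁ A₂ X : Set V)
    (h₁ : IsCutSep G A₁) (h₂ : IsCutSep G A₂) (hX : IsCutSep G X)
    (hcross : Crosses A₁ A₂) (hn₁ : Nested X A₁) (hn₂ : Nested X A₂)
    (hne : (A₁ ∩ A₂).Nonempty) :
    Nested X (A₁ ∩ A₂) := by
  unfold Crosses Nested at *
  push_neg at hcross
  obtain ⟨c1, c2, c3, c4⟩ := hcross
  rcases hn₁ with h1 | h1 | h1 | h1 <;> rcases hn₂ with h2 | h2 | h2 | h2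
  · exact Or.inl (Set.subset_inter h1 h2)
  · exact Or.inr (Or.inl (h2.trans (by intro x hx; simp at hx ⊢; tauto)))
  · exact absurd (fun x hx => by by_contra hc; exact hx (h1 (by_contra fun hX => hc (h2 hX)))) c3
  · exact Or.inr (Or.inr (Or.inr (h2.trans (by intro x hx; simp at hx ⊢; tauto))))
  · exact Or.inr (Or.inl (h1.trans (by intro x hx; simp at hx ⊢; tauto)))
  · exact Or.inr (Or.inl (h1.trans (by intro x hx; simp at hx ⊢; tauto)))
  · exact Or.inr (Or.inl (h1.trans (by intro x hx; simp at hx ⊢; tauto)))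
  · exact Or.inr (Or.inl (h1.trans (by intro x hx; simp at hx ⊢; tauto)))
  · exact absurd (fun x hx => h2 (by_contra fun hX => hx (h1 hX))) c3
  · exact absurd (fun x hx hA2 => hx (h1 (fun hX => h2 hX hA2)) : A₁ᶜ ⊆ A₂ᶜ) c4
  · exact Or.inr (Or.inr (Or.inl (Set.subset_inter h1 h2)))
  · exact Or.inr (Or.inr (Or.inr (h2.trans (by intro x hx; simp at hx ⊢; tauto))))
  · exact Or.inr (Or.inr (Or.inr (h1.trans (by intro x hx; simp at hx ⊢; tauto))))
  · exact Or.inr (Or.inr (Or.inr (h1.trans (by intro x hx; simp at hx ⊢; tauto))))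
  · exact Or.inr (Or.inr (Or.inr (h1.trans (by intro x hx; simp at hx ⊢; tauto))))
  · exact Or.inr (Or.inr (Or.inr (h1.trans (by intro x hx; simp at hx ⊢; tauto))))
end

section
/- Let {A₁,B₁} and {A₂,B₂} be crossing cut-separations of a graph such that both {A₁∩A₂, B₁∪B₂} and {A₁∪A₂, B₁∩B₂} are cut-separations. Then every cut-separation that crosses both {A₁∩A₂, B₁∪B₂} and {A₁∪A₂, B₁∩B₂} also crosses both {A₁,B₁} and {A₂,B₂}. -/
open SimpleGraph

variable {V : Type*}

/-- Lemma 3.4: a cut-separation crossing both opposite corners crosses both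
original cut-separations. -/
theorem stmt_5 (G : SimpleGraph V) (A₁ A₂ X : Set V)
    (h₁ : IsCutSep G A₁) (h₂ : IsCutSep G A₂) (hX : IsCutSep G X)
    (hcross : Crosses A₁ A₂)
    (hc₁ : IsCutSep G (A₁ ∩ A₂)) (hc₂ : IsCutSep G (A₁ ∪ A₂))
    (hx₁ : Crosses X (A₁ ∩ A₂)) (hx₂ : Crosses X (A₁ ∪ A₂)) :
    Crosses X A₁ ∧ Crosses X A₂ := by
  constructor
  · rintro (h|h|h|h)
    · exact hx₂ (Or.inl (h.trans Set.subset_union_left))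
    · exact hx₁ (Or.inr (Or.inl (h.trans (Set.compl_subset_compl.2 Set.inter_subset_left))))
    · exact hx₂ (Or.inr (Or.inr (Or.inl (h.trans Set.subset_union_left))))
    · exact hx₁ (Or.inr (Or.inr (Or.inr (h.trans (Set.compl_subset_compl.2 Set.inter_subset_left)))))
  · rintro (h|h|h|h)
    · exact hx₂ (Or.inl (h.trans Set.subset_union_right))
    · exact hx₁ (Or.inr (Or.inl (h.trans (Set.compl_subset_compl.2 Set.inter_subset_right))))
    · exact hx₂ (Or.inr (Or.inr (Or.inl (h.trans Set.subset_union_right))))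
    · exact hx₁ (Or.inr (Or.inr (Or.inr (h.trans (Set.compl_subset_compl.2 Set.inter_subset_right)))))
end

section
/- If two bond-separations {A,B} and {A',B'} of a graph G cross, then the subgraph G[A'] contains an edge of the cut E(A,B), and likewise G[B'] contains an edge of E(A,B). -/
open SimpleGraph

variable {V : Type*}

lemma walk_cross_edge (G : SimpleGraph V) (A S : Set V) :
    ∀ {x y : ↥S} (_ : (G.induce S).Walk x y), x.1 ∈ A → y.1 ∉ A →
    ∃ u v, G.Adj u v ∧ u ∈ A ∧ v ∉ A ∧ u ∈ S ∧ v ∈ S := by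
  intro x y p
  induction p with
  | nil => intro h h'; exact absurd h h'
  | @cons x m y h p ih =>
    intro hx hy
    by_cases hm : m.1 ∈ A
    · exact ih hm hy
    · exact ⟨x.1, m.1, h, hx, hm, x.2, m.2⟩

lemma conn_cross_edge (G : SimpleGraph V) (A S : Set V)
    (hS : (G.induce S).Connected) {a b : V} (ha : a ∈ S) (haA : a ∈ A)
    (hb : b ∈ S) (hbA : b ∉ A) :
    ∃ u v, G.Adj u v ∧ u ∈ A ∧ v ∉ A ∧ u ∈ S ∧ v ∈ S := by
  obtain ⟨p⟩ := hS ⟨a, ha⟩ ⟨b, hb⟩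
  exact walk_cross_edge G A S p haA hbA

/-- If two bond-separations cross, each side of one contains an edge of the
other's cut. -/
theorem stmt_14 (G : SimpleGraph V) (A A' : Set V)
    (hA : IsBondSep G A) (hA' : IsBondSep G A') (hcross : Crosses A A') :
    (∃ u v, G.Adj u v ∧ u ∈ A ∧ v ∉ A ∧ u ∈ A' ∧ v ∈ A') ∧
    (∃ u v, G.Adj u v ∧ u ∈ A ∧ v ∉ A ∧ u ∈ A'ᶜ ∧ v ∈ A'ᶜ) := by
  rw [Crosses, Nested] at hcross
  push_neg at hcross
  obtain ⟨h1, h2, h3, h4⟩ := hcross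
  obtain ⟨a1, ha1A, ha1⟩ := Set.not_subset.mp h1   -- a1 ∈ A, a1 ∉ A'
  obtain ⟨a2, ha2A, ha2⟩ := Set.not_subset.mp h2   -- a2 ∈ A, a2 ∉ A'ᶜ
  obtain ⟨b1, hb1A, hb1⟩ := Set.not_subset.mp h3   -- b1 ∈ Aᶜ, b1 ∉ A'
  obtain ⟨b2, hb2A, hb2⟩ := Set.not_subset.mp h4   -- b2 ∈ Aᶜ, b2 ∉ A'ᶜ
  simp only [Set.mem_compl_iff, not_not] at ha1 ha2 hb1 hb2 hb1A hb2A
  constructor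
  · exact conn_cross_edge G A A' hA'.2.2.1 ha2 ha2A hb2 hb2A
  · exact conn_cross_edge G A A'ᶜ hA'.2.2.2 ha1 ha1A hb1 hb1A
end

section
/- Every finite connected graph G has a nested set of bonds that efficiently distinguishes all the edge-blocks of G: for every two disjoint edge-blocks β₁, β₂ there is a bond in the set separating β₁ from β₂ whose size equals the minimum size of an edge set separating β₁ from β₂. -/
/-!
For distinct vertices `x, y` pick a set `A` whose cut `δ(A)` is a minimum `x`-`y` edge cut. In a
connected graph both sides of a minimum cut are connected, so `δ(A)` is a bond. Submodularity,
`|δ(A ∩ C)| + |δ(A ∪ C)| ≤ |δ(A)| + |δ(C)|`, shows that if `A` and `C` are minimum cuts (for any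
pairs), some corner `A^± ∩ C^±` is again a minimum cut for the pair of `C`; such a corner is nested
with `A` and with every set nested with both `A` and `C`. Hence a maximal nested family of minimum
cuts contains one for every pair of vertices. Two disjoint edge-blocks, a `k₁`-block around `v₁` and
a `k₂`-block around `v₂`, are distinguished by the minimum `v₁`-`v₂` cut of the family: it has
fewer than `k₁` and fewer than `k₂` edges, so it splits neither block, and every edge set
separating the blocks separates `v₁` from `v₂`.
-/

open SimpleGraph

variable {V : Type*}

namespace SimpleGraph

variable {G : SimpleGraph V} {A X : Set V} {k : ℕ} {u v w x y : V}

theorem mem_cutEdges : s(x, y) ∈ cutEdges G A ↔ G.Adj x y ∧ Xor (x ∈ A) (y ∈ A) := by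
  constructor
  · rintro ⟨a, b, he, hab, ha, hb⟩
    rcases Sym2.eq_iff.1 he with ⟨rfl, rfl⟩ | ⟨rfl, rfl⟩
    · exact ⟨hab, Or.inl ⟨ha, hb⟩⟩
    · exact ⟨hab.symm, Or.inr ⟨ha, hb⟩⟩
  · rintro ⟨hxy, ⟨hx, hy⟩ | ⟨hy, hx⟩⟩
    · exact ⟨x, y, rfl, hxy, hx, hy⟩
    · exact ⟨y, x, Sym2.eq_swap, hxy.symm, hy, hx⟩

@[simp]
theorem cutEdges_compl (G : SimpleGraph V) (A : Set V) : cutEdges G Aᶜ = cutEdges G A := by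
  ext e
  induction e using Sym2.ind with
  | _ x y => simp only [mem_cutEdges, Set.mem_compl_iff, xor_not_not]

theorem cutEdges_finite [Finite V] (G : SimpleGraph V) (A : Set V) : (cutEdges G A).Finite :=
  Set.toFinite _

theorem mem_iff_mem_of_reachable_deleteEdges_cutEdges
    (h : (G.deleteEdges (cutEdges G A)).Reachable x y) : (x ∈ A ↔ y ∈ A) := by
  obtain ⟨p⟩ := h
  induction p with
  | nil => rfl
  | cons hadj _ ih =>
    rw [← ih]
    by_contra hne
    exact (deleteEdges_adj.1 hadj).2 (mem_cutEdges.2 ⟨(deleteEdges_adj.1 hadj).1, by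
      rw [xor_iff_not_iff]; exact hne⟩)

theorem not_reachable_deleteEdges_cutEdges (h : Xor (x ∈ A) (y ∈ A)) :
    ¬ (G.deleteEdges (cutEdges G A)).Reachable x y :=
  fun hr => (xor_iff_not_iff _ _).1 h (mem_iff_mem_of_reachable_deleteEdges_cutEdges hr)

theorem cutEdges_setOf_reachable_subset (F : Set (Sym2 V)) (x : V) :
    cutEdges G {y | (G.deleteEdges F).Reachable x y} ⊆ F := by
  rintro e ⟨a, b, rfl, hab, ha, hb⟩
  by_contra he
  exact hb (ha.trans (deleteEdges_adj.2 ⟨hab, he⟩).reachable)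

theorem ncard_cutEdges_inter_add_ncard_cutEdges_union_le [Finite V] (G : SimpleGraph V)
    (A C : Set V) :
    (cutEdges G (A ∩ C)).ncard + (cutEdges G (A ∪ C)).ncard ≤
      (cutEdges G A).ncard + (cutEdges G C).ncard := by
  have hunion : cutEdges G (A ∩ C) ∪ cutEdges G (A ∪ C) ⊆ cutEdges G A ∪ cutEdges G C := by
    intro e
    induction e using Sym2.ind with
    | _ x y => simp only [Set.mem_union, mem_cutEdges, Set.mem_inter_iff, Xor]; tauto
  have hinter : cutEdges G (A ∩ C) ∩ cutEdges G (A ∪ C) ⊆ cutEdges G A ∩ cutEdges G C := by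
    intro e
    induction e using Sym2.ind with
    | _ x y => simp only [Set.mem_union, mem_cutEdges, Set.mem_inter_iff, Xor]; tauto
  rw [← Set.ncard_union_add_ncard_inter (cutEdges G (A ∩ C)),
    ← Set.ncard_union_add_ncard_inter (cutEdges G A)]
  exact add_le_add (Set.ncard_le_ncard hunion) (Set.ncard_le_ncard hinter)

/-- `λ(u, v)`. For `u = v` no edge set separates, and the value is the junk `sInf ∅ = 0`. -/
noncomputable def localEdgeConnectivity (G : SimpleGraph V) (u v : V) : ℕ :=
  sInf {n | ∃ F : Set (Sym2 V), F.Finite ∧ F.ncard = n ∧ ¬ (G.deleteEdges F).Reachable u v}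

theorem localEdgeConnectivity_le {F : Set (Sym2 V)} (hF : F.Finite)
    (h : ¬ (G.deleteEdges F).Reachable u v) : G.localEdgeConnectivity u v ≤ F.ncard :=
  Nat.sInf_le ⟨F, hF, rfl, h⟩

theorem localEdgeConnectivity_comm (G : SimpleGraph V) (u v : V) :
    G.localEdgeConnectivity u v = G.localEdgeConnectivity v u := by
  simp only [localEdgeConnectivity, reachable_comm]

theorem localEdgeConnectivity_le_ncard_cutEdges [Finite V] (h : Xor (x ∈ A) (y ∈ A)) :
    G.localEdgeConnectivity x y ≤ (cutEdges G A).ncard :=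
  localEdgeConnectivity_le (cutEdges_finite G A) (not_reachable_deleteEdges_cutEdges h)

def IsMinCut (G : SimpleGraph V) (x y : V) (A : Set V) : Prop :=
  Xor (x ∈ A) (y ∈ A) ∧ (cutEdges G A).ncard = G.localEdgeConnectivity x y

theorem IsMinCut.symm (h : G.IsMinCut x y A) : G.IsMinCut y x A :=
  ⟨xor_comm (x ∈ A) (y ∈ A) ▸ h.1, h.2.trans (G.localEdgeConnectivity_comm x y)⟩

theorem IsMinCut.compl (h : G.IsMinCut x y A) : G.IsMinCut x y Aᶜ := by
  simpa only [IsMinCut, Set.mem_compl_iff, xor_not_not, cutEdges_compl] using h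

theorem exists_isMinCut [Finite V] (hxy : x ≠ y) : ∃ A, G.IsMinCut x y A := by
  have hne : {n | ∃ F : Set (Sym2 V), F.Finite ∧ F.ncard = n ∧
      ¬ (G.deleteEdges F).Reachable x y}.Nonempty :=
    ⟨_, _, cutEdges_finite G {x}, rfl,
      not_reachable_deleteEdges_cutEdges (Or.inl ⟨rfl, hxy.symm⟩)⟩
  obtain ⟨F, hF, hFcard, hFxy⟩ := Nat.sInf_mem hne
  set A := {z | (G.deleteEdges F).Reachable x z}
  have hsep : Xor (x ∈ A) (y ∈ A) := Or.inl ⟨Reachable.refl x, hFxy⟩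
  refine ⟨A, hsep, le_antisymm ?_ (localEdgeConnectivity_le_ncard_cutEdges hsep)⟩
  exact (Set.ncard_le_ncard (cutEdges_setOf_reachable_subset F x) hF).trans_eq hFcard

theorem eq_of_subset_of_cutEdges_eq (hG : G.Preconnected) (hXA : X ⊆ A) (hX : X.Nonempty)
    (hcut : cutEdges G X = cutEdges G A) : X = A := by
  refine hXA.antisymm fun a ha => by_contra fun haX => ?_
  obtain ⟨b, hb⟩ := hX
  obtain ⟨p⟩ := hG a b
  obtain ⟨d, -, hd, hd'⟩ := p.exists_boundary_dart (A \ X) ⟨ha, haX⟩ fun h => h.2 hb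
  have hdX := Set.ext_iff.1 hcut s(d.fst, d.snd)
  simp only [mem_cutEdges, d.adj, true_and, Xor] at hdX
  -- `d` leaves `A \ X` either into `X` (an edge of `δX` inside `A`) or out of `A` (an edge of `δA`
  -- missing `X`).
  have hsnd := @hXA d.snd
  simp only [Set.mem_sdiff] at hd hd'
  tauto

theorem IsMinCut.connected_induce [Finite V] (hG : G.Connected) (hA : G.IsMinCut x y A)
    (hx : x ∈ A) : (G.induce A).Connected := by
  -- The component `X` of `x` in `G[A]` has `δX ⊆ δA` and still separates `x` from `y`, so the
  -- minimality of `δA` forces `δX = δA`.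
  set X := {a | ∃ h : a ∈ A, (G.induce A).Reachable ⟨x, hx⟩ ⟨a, h⟩}
  have hXA : X ⊆ A := fun a ⟨h, _⟩ => h
  have hxX : x ∈ X := ⟨hx, Reachable.refl _⟩
  have hyX : y ∉ X := fun hy => hA.1.elim (fun h => h.2 (hXA hy)) fun h => h.2 hx
  have hsub : cutEdges G X ⊆ cutEdges G A := by
    rintro e ⟨a, b, rfl, hab, ⟨ha, hxa⟩, hbX⟩
    refine ⟨a, b, rfl, hab, ha, fun hb => hbX ⟨hb, hxa.trans ?_⟩⟩
    exact Adj.reachable (by exact hab : (G.induce A).Adj ⟨a, ha⟩ ⟨b, hb⟩)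
  have hle : (cutEdges G A).ncard ≤ (cutEdges G X).ncard :=
    hA.2 ▸ localEdgeConnectivity_le_ncard_cutEdges (Or.inl ⟨hxX, hyX⟩)
  have hXeq : X = A := eq_of_subset_of_cutEdges_eq hG.preconnected hXA ⟨x, hxX⟩
    (Set.eq_of_subset_of_ncard_le hsub hle)
  have hreach : ∀ a (ha : a ∈ A), (G.induce A).Reachable ⟨x, hx⟩ ⟨a, ha⟩ := fun a ha => by
    obtain ⟨_, h⟩ := hXeq.symm ▸ ha
    exact h
  have : Nonempty A := ⟨⟨x, hx⟩⟩
  exact ⟨fun a b => (hreach a a.2).symm.trans (hreach b b.2)⟩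

theorem IsMinCut.isBondSep [Finite V] (hG : G.Connected) (hA : G.IsMinCut x y A) :
    IsBondSep G A := by
  wlog hx : x ∈ A generalizing x y
  · exact this hA.symm (hA.1.resolve_left fun h => hx h.1).1
  have hy : y ∉ A := (hA.1.resolve_right fun h => h.2 hx).2
  exact ⟨⟨x, hx⟩, ⟨y, hy⟩, hA.connected_induce hG hx, hA.symm.compl.connected_induce hG hy⟩

theorem insep_refl (G : SimpleGraph V) (k : ℕ) (v : V) : Insep G k v v :=
  fun _ _ _ => Reachable.refl v

theorem localEdgeConnectivity_lt_of_not_insep (h : ¬ Insep G k u v) :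
    G.localEdgeConnectivity u v < k := by
  simp only [Insep, not_forall] at h
  obtain ⟨F, hF, hlt, hsep⟩ := h
  exact (localEdgeConnectivity_le hF hsep).trans_lt hlt

theorem Insep.mem_iff_mem [Finite V] (h : Insep G k u w) (hA : (cutEdges G A).ncard < k) :
    u ∈ A ↔ w ∈ A :=
  mem_iff_mem_of_reachable_deleteEdges_cutEdges (h _ (cutEdges_finite G A) hA)

end SimpleGraph

section Nested

variable {A C D K : Set V}

theorem Nested.refl (A : Set V) : Nested A A := Or.inl subset_rfl

theorem Nested.symm (h : Nested A C) : Nested C A := by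
  rcases h with h | h | h | h
  · exact Or.inr (Or.inr (Or.inr (Set.compl_subset_compl.2 h)))
  · exact Or.inr (Or.inl (Set.subset_compl_comm.1 h))
  · exact Or.inr (Or.inr (Or.inl (Set.compl_subset_comm.1 h)))
  · exact Or.inl (Set.compl_subset_compl.1 h)

@[simp]
theorem nested_compl_left : Nested Aᶜ C ↔ Nested A C := by
  simp only [Nested, compl_compl]
  tauto

@[simp]
theorem nested_compl_right : Nested A Cᶜ ↔ Nested A C := by
  simp only [Nested, compl_compl]
  tauto

theorem Nested.inter (hAC : Crosses A C) (hDA : Nested D A) (hDC : Nested D C) :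
    Nested D (A ∩ C) := by
  -- Crossing makes all four corners of `A, C` nonempty, which excludes every mixed case.
  simp only [Crosses, Nested, Set.not_subset, not_or] at hAC
  simp only [Nested, Set.subset_def] at *
  grind

def IsCornerOf (A C K : Set V) : Prop :=
  ∃ P Q, (P = A ∨ P = Aᶜ) ∧ (Q = C ∨ Q = Cᶜ) ∧ K = P ∩ Q

theorem IsCornerOf.of_compl_left (h : IsCornerOf Aᶜ C K) : IsCornerOf A C K := by
  obtain ⟨P, Q, hP, hQ, rfl⟩ := h
  exact ⟨P, Q, by rwa [compl_compl, or_comm] at hP, hQ, rfl⟩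

theorem IsCornerOf.of_compl_right (h : IsCornerOf A Cᶜ K) : IsCornerOf A C K := by
  obtain ⟨P, Q, hP, hQ, rfl⟩ := h
  exact ⟨P, Q, hP, by rwa [compl_compl, or_comm] at hQ, rfl⟩

theorem IsCornerOf.nested_left (h : IsCornerOf A C K) : Nested A K := by
  obtain ⟨P, Q, hP | hP, -, rfl⟩ := h <;> subst hP
  · exact Or.inr (Or.inr (Or.inr (Set.compl_subset_compl.2 Set.inter_subset_left)))
  · exact Or.inr (Or.inl (Set.subset_compl_comm.1 Set.inter_subset_left))

theorem IsCornerOf.nested (h : IsCornerOf A C K) (hAC : Crosses A C) (hDA : Nested D A)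
    (hDC : Nested D C) : Nested D K := by
  obtain ⟨P, Q, hP | hP, hQ | hQ, rfl⟩ := h <;> subst hP hQ <;>
    exact Nested.inter (by simpa [Crosses] using hAC) (by simpa using hDA) (by simpa using hDC)

end Nested

namespace SimpleGraph

variable [Finite V] {G : SimpleGraph V} {A C : Set V} {M : Set (Set V)} {B₁ B₂ : Set V}
  {k₁ k₂ : ℕ} {u v x y : V}

theorem IsMinCut.inter (hA : G.IsMinCut u v A) (hC : G.IsMinCut x y C)
    (hxy : Xor (x ∈ A ∩ C) (y ∈ A ∩ C)) (huv : Xor (u ∈ A ∪ C) (v ∈ A ∪ C)) :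
    G.IsMinCut x y (A ∩ C) := by
  refine ⟨hxy, le_antisymm ?_ (localEdgeConnectivity_le_ncard_cutEdges hxy)⟩
  have hsubmod := ncard_cutEdges_inter_add_ncard_cutEdges_union_le G A C
  have hunion := localEdgeConnectivity_le_ncard_cutEdges (G := G) huv
  have hAcard := hA.2
  have hCcard := hC.2
  omega

/-- Both diagonals of the corners separate a pair here, so submodularity along `A, Cᶜ` gives
`λ(u, v) ≤ λ(x, y)`, and then submodularity along `A, C` makes `A ∩ C` a minimum cut. -/
theorem IsMinCut.inter_of_mem_diagonal (hA : G.IsMinCut u v A) (hC : G.IsMinCut x y C)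
    (hx : x ∈ A ∩ C) (hy : y ∉ A ∪ C) (hu : u ∈ A \ C) (hv : v ∈ C \ A) :
    G.IsMinCut x y (A ∩ C) := by
  simp only [Set.mem_inter_iff, Set.mem_union, Set.mem_sdiff, not_or] at hx hy hu hv
  have hxy : Xor (x ∈ A ∩ C) (y ∈ A ∩ C) := Or.inl ⟨hx, fun h => hy.1 h.1⟩
  refine ⟨hxy, le_antisymm ?_ (localEdgeConnectivity_le_ncard_cutEdges hxy)⟩
  have hsubmod := ncard_cutEdges_inter_add_ncard_cutEdges_union_le G A C
  have hsubmod' := ncard_cutEdges_inter_add_ncard_cutEdges_union_le G A Cᶜ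
  rw [cutEdges_compl] at hsubmod'
  have hunion : G.localEdgeConnectivity x y ≤ (cutEdges G (A ∪ C)).ncard :=
    localEdgeConnectivity_le_ncard_cutEdges (Or.inl ⟨Or.inl hx.1, by simpa using hy⟩)
  have hinter' : G.localEdgeConnectivity u v ≤ (cutEdges G (A ∩ Cᶜ)).ncard :=
    localEdgeConnectivity_le_ncard_cutEdges (Or.inl ⟨hu, fun h => hv.2 h.1⟩)
  have hunion' : G.localEdgeConnectivity u v ≤ (cutEdges G (A ∪ Cᶜ)).ncard :=
    localEdgeConnectivity_le_ncard_cutEdges (Or.inl ⟨Or.inl hu.1, by simp [hv.1, hv.2]⟩)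
  have hAcard := hA.2
  have hCcard := hC.2
  omega

theorem exists_isCornerOf_isMinCut_of_mem (hA : G.IsMinCut u v A) (hC : G.IsMinCut x y C)
    (hxA : x ∈ A) (hxC : x ∈ C) (huA : u ∈ A) : ∃ K, IsCornerOf A C K ∧ G.IsMinCut x y K := by
  have hyC : y ∉ C := (hC.1.resolve_right fun h => h.2 hxC).2
  have hvA : v ∉ A := (hA.1.resolve_right fun h => h.2 huA).2
  by_cases hvC : v ∉ C
  · exact ⟨A ∩ C, ⟨A, C, .inl rfl, .inl rfl, rfl⟩,
      hA.inter hC (by simp [Xor, *]) (by simp [Xor, *])⟩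
  by_cases hyA : y ∈ A
  · exact ⟨A ∩ Cᶜ, ⟨A, Cᶜ, .inl rfl, .inr rfl, rfl⟩,
      hA.inter hC.compl (by simp [Xor, *]) (by simp [Xor, *])⟩
  by_cases huC : u ∈ C
  · exact ⟨Aᶜ ∩ Cᶜ, ⟨Aᶜ, Cᶜ, .inr rfl, .inr rfl, rfl⟩,
      hA.compl.inter hC.compl (by simp [Xor, *]) (by simp [Xor, *])⟩
  · exact ⟨A ∩ C, ⟨A, C, .inl rfl, .inl rfl, rfl⟩,
      hA.inter_of_mem_diagonal hC ⟨hxA, hxC⟩ (by simp [*]) ⟨huA, huC⟩ ⟨not_not.1 hvC, hvA⟩⟩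

theorem exists_isCornerOf_isMinCut (hA : G.IsMinCut u v A) (hC : G.IsMinCut x y C) :
    ∃ K, IsCornerOf A C K ∧ G.IsMinCut x y K := by
  wlog hxA : x ∈ A generalizing A
  · obtain ⟨K, hK, hKmin⟩ := this hA.compl hxA
    exact ⟨K, hK.of_compl_left, hKmin⟩
  wlog hxC : x ∈ C generalizing C
  · obtain ⟨K, hK, hKmin⟩ := this hC.compl hxC
    exact ⟨K, hK.of_compl_right, hKmin⟩
  wlog huA : u ∈ A generalizing u v
  · exact this hA.symm (hA.1.resolve_left fun h => huA h.1).1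
  exact exists_isCornerOf_isMinCut_of_mem hA hC hxA hxC huA

/-- Uncrossing: a minimum `x`-`y` cut crossing the fewest members of `M` crosses none, since
replacing it by a suitable corner with a crossing member of `M` would cross strictly fewer. -/
theorem exists_isMinCut_forall_nested (hM : ∀ D ∈ M, ∃ u v, G.IsMinCut u v D)
    (hMnested : ∀ D ∈ M, ∀ E ∈ M, Nested D E) (hxy : x ≠ y) :
    ∃ C, G.IsMinCut x y C ∧ ∀ D ∈ M, Nested D C := by
  obtain ⟨C, hC, hCmin⟩ := Set.exists_min_image {C | G.IsMinCut x y C}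
    (fun C => {D ∈ M | Crosses D C}.ncard) (Set.toFinite _) (exists_isMinCut hxy)
  refine ⟨C, hC, fun D hD => by_contra fun hDC => ?_⟩
  obtain ⟨u, v, hDcut⟩ := hM D hD
  obtain ⟨K, hK, hKcut⟩ := exists_isCornerOf_isMinCut hDcut hC
  have hfewer : {E ∈ M | Crosses E K} ⊂ {E ∈ M | Crosses E C} := by
    have hsub : {E ∈ M | Crosses E K} ⊆ {E ∈ M | Crosses E C} :=
      fun E ⟨hE, hEK⟩ => ⟨hE, fun hEC => hEK (hK.nested hDC (hMnested E hE D hD) hEC)⟩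
    exact (Set.ssubset_iff_of_subset hsub).2 ⟨D, ⟨hD, hDC⟩, fun h => h.2 hK.nested_left⟩
  exact (hCmin K hKcut).not_gt (Set.ncard_lt_ncard hfewer)

/-- A maximal nested family of minimum cuts contains a minimum cut for every pair of vertices. -/
theorem exists_nested_family_isMinCut (G : SimpleGraph V) :
    ∃ M : Set (Set V), (∀ A ∈ M, ∃ u v, G.IsMinCut u v A) ∧
      (∀ A ∈ M, ∀ C ∈ M, Nested A C) ∧ ∀ x y, x ≠ y → ∃ A ∈ M, G.IsMinCut x y A := by
  obtain ⟨M, ⟨hMcut, hMnested⟩, hMmax⟩ := Set.Finite.exists_maximal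
    (s := {M : Set (Set V) | (∀ A ∈ M, ∃ u v, G.IsMinCut u v A) ∧
      ∀ A ∈ M, ∀ C ∈ M, Nested A C}) (Set.toFinite _)
    ⟨∅, fun _ h => h.elim, fun _ h => h.elim⟩
  refine ⟨M, hMcut, hMnested, fun x y hxy => ?_⟩
  obtain ⟨C, hC, hCnested⟩ := exists_isMinCut_forall_nested hMcut hMnested hxy
  have hcut : ∀ A ∈ insert C M, ∃ u v, G.IsMinCut u v A := by
    rintro A (rfl | hA)
    exacts [⟨x, y, hC⟩, hMcut A hA]
  have hnested : ∀ A ∈ insert C M, ∀ B ∈ insert C M, Nested A B := by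
    rintro A (rfl | hA) B (rfl | hB)
    exacts [Nested.refl _, (hCnested B hB).symm, hCnested A hA, hMnested A hA B hB]
  exact ⟨C, hMmax ⟨hcut, hnested⟩ (Set.subset_insert C M) (Set.mem_insert C M), hC⟩

theorem IsMinCut.separates_edgeBlocks (hA : G.IsMinCut u v A)
    (hu : ¬ Insep G k₁ u v) (hv : ¬ Insep G k₂ v u) :
    {w | Insep G k₁ u w} ⊆ A ∧ {w | Insep G k₂ v w} ⊆ Aᶜ ∨
      {w | Insep G k₂ v w} ⊆ A ∧ {w | Insep G k₁ u w} ⊆ Aᶜ := by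
  have h₁ : (cutEdges G A).ncard < k₁ := hA.2 ▸ localEdgeConnectivity_lt_of_not_insep hu
  have h₂ : (cutEdges G A).ncard < k₂ :=
    hA.2 ▸ G.localEdgeConnectivity_comm u v ▸ localEdgeConnectivity_lt_of_not_insep hv
  rcases hA.1 with ⟨huA, hvA⟩ | ⟨hvA, huA⟩
  · exact .inl ⟨fun w hw => (hw.mem_iff_mem h₁).1 huA,
      fun w hw hwA => hvA ((hw.mem_iff_mem h₂).2 hwA)⟩
  · exact .inr ⟨fun w hw => (hw.mem_iff_mem h₂).1 hvA,
      fun w hw hwA => huA ((hw.mem_iff_mem h₁).2 hwA)⟩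

theorem sepOrder_eq_of_isMinCut (hA : G.IsMinCut u v A) (hu : u ∈ B₁) (hv : v ∈ B₂)
    (hB : B₁ ⊆ A ∧ B₂ ⊆ Aᶜ ∨ B₂ ⊆ A ∧ B₁ ⊆ Aᶜ) : sepOrder G B₁ B₂ = (cutEdges G A).ncard := by
  have hsep : SepSets G B₁ B₂ (cutEdges G A) := fun a ha b hb =>
    not_reachable_deleteEdges_cutEdges <| by
      rcases hB with ⟨h₁, h₂⟩ | ⟨h₂, h₁⟩
      exacts [.inl ⟨h₁ ha, h₂ hb⟩, .inr ⟨h₂ hb, h₁ ha⟩]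
  refine le_antisymm (Nat.sInf_le ⟨_, cutEdges_finite G A, rfl, hsep⟩) ?_
  refine le_csInf ⟨_, _, cutEdges_finite G A, rfl, hsep⟩ ?_
  rintro n ⟨F, hF, rfl, hFsep⟩
  exact hA.2 ▸ localEdgeConnectivity_le hF (hFsep u hu v hv)

end SimpleGraph

/-- Theorem 1 (finite case): every finite connected graph has a nested set of bonds
that efficiently distinguishes all its edge-blocks. -/
theorem stmt_18 [Fintype V] (G : SimpleGraph V) (hG : G.Connected) :
    ∃ M : Set (Set V), (∀ A ∈ M, IsBondSep G A) ∧
      (∀ A ∈ M, ∀ C ∈ M, Nested A C) ∧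
      ∀ k₁ k₂ B₁ B₂, IsEdgeBlock G k₁ B₁ → IsEdgeBlock G k₂ B₂ →
        Disjoint B₁ B₂ →
        ∃ A ∈ M, (B₁ ⊆ A ∧ B₂ ⊆ Aᶜ ∨ B₂ ⊆ A ∧ B₁ ⊆ Aᶜ) ∧
          (cutEdges G A).ncard = sepOrder G B₁ B₂ := by
  obtain ⟨M, hMcut, hMnested, hMall⟩ := exists_nested_family_isMinCut G
  refine ⟨M, fun A hA => ?_, hMnested, ?_⟩
  · obtain ⟨u, v, hAcut⟩ := hMcut A hA
    exact hAcut.isBondSep hG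
  rintro k₁ k₂ _ _ ⟨v₁, rfl⟩ ⟨v₂, rfl⟩ hdisj
  have h₁ : ¬ Insep G k₁ v₁ v₂ := fun h => Set.disjoint_left.1 hdisj h (insep_refl G k₂ v₂)
  have h₂ : ¬ Insep G k₂ v₂ v₁ := fun h => Set.disjoint_right.1 hdisj h (insep_refl G k₁ v₁)
  have hne : v₁ ≠ v₂ := by
    rintro rfl
    exact h₁ (insep_refl G k₁ v₁)
  obtain ⟨A, hAM, hAcut⟩ := hMall v₁ v₂ hne
  have hB := hAcut.separates_edgeBlocks h₁ h₂
  exact ⟨A, hAM, hB,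
    (sepOrder_eq_of_isMinCut hAcut (insep_refl G k₁ v₁) (insep_refl G k₂ v₂) hB).symm⟩
end
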